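/- The absolute values of the first-row entries of the discretized fractional Laplacian matrix A decay monotonically away from the diagonal: a_{11} > |a_{12}| > |a_{13}| > ⋯ > |a_{1,N−1}|, and moreover |a_{1,N−1}| → 0 as N → ∞. -/

import Mathlib

/-!
For `k ≥ 2` the entry is `a_{1,k+1} = -(C/2) F(k)` with `F = flProfile ν μ`,
`F(x) = ((x+1)^ν - (x-1)^ν) / x^μ = x^(ν-μ) φ(1/x)`, `φ(t) = (1+t)^ν - (1-t)^ν`.
Since `ν < μ` and `φ` is increasing on `[0,1]`, both factors decrease in `x`, so `F` is strictly
decreasing on `[1,∞)`, and `F(x) ≤ 2^ν x^(ν-μ) → 0`. The chain starts correctly because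
`κ_μ ≥ 1` gives `|a₁₂| ≥ (C/2) 2^ν = (C/2) F(1)`, and `a₁₁ > 2|a₁₂|` since its other
terms are nonnegative.
-/

/-- First-row entries (by offset `k = |i-j|`) of the finite difference discretization
of the 1D integral fractional Laplacian. -/
noncomputable def flEntry (α μ ν κμ C : ℝ) (N : ℕ) : ℕ → ℝ := fun k =>
  if k = 0 then
    C * ((∑ ℓ ∈ Finset.Icc 2 (N - 1), (((ℓ : ℝ) + 1) ^ ν - ((ℓ : ℝ) - 1) ^ ν) / (ℓ : ℝ) ^ μ)
      + ((N : ℝ) ^ ν - ((N : ℝ) - 1) ^ ν) / (N : ℝ) ^ μ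
      + ((2 : ℝ) ^ ν + κμ - 1) + 2 * ν / (α * (N : ℝ) ^ α))
  else if k = 1 then -(C * ((2 : ℝ) ^ ν + κμ - 1) / 2)
  else -(C * (((k : ℝ) + 1) ^ ν - ((k : ℝ) - 1) ^ ν) / (2 * (k : ℝ) ^ μ))

/-- The `(N-1)×(N-1)` symmetric Toeplitz matrix of the discretized fractional Laplacian. -/
noncomputable def flMatrix (α μ ν κμ C : ℝ) (N : ℕ) :
    Matrix (Fin (N - 1)) (Fin (N - 1)) ℝ :=
  fun i j => flEntry α μ ν κμ C N (((i.val : ℤ) - (j.val : ℤ)).natAbs)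

open Real Filter Topology

noncomputable def flProfile (ν μ x : ℝ) : ℝ := ((x + 1) ^ ν - (x - 1) ^ ν) / x ^ μ

section Profile

variable {ν μ : ℝ}

lemma one_add_rpow_sub_one_sub_rpow_lt (hν : 0 < ν) {s t : ℝ} (hs : 0 ≤ s) (hst : s < t)
    (ht : t ≤ 1) : (1 + s) ^ ν - (1 - s) ^ ν < (1 + t) ^ ν - (1 - t) ^ ν := by
  have hplus : (1 + s) ^ ν < (1 + t) ^ ν := rpow_lt_rpow (by linarith) (by linarith) hν
  have hminus : (1 - t) ^ ν ≤ (1 - s) ^ ν := rpow_le_rpow (by linarith) (by linarith) hν.le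
  linarith

lemma flProfile_pos (hν : 0 < ν) {x : ℝ} (hx : 1 ≤ x) : 0 < flProfile ν μ x :=
  div_pos (sub_pos.mpr (rpow_lt_rpow (by linarith) (by linarith) hν)) (by positivity)

lemma flProfile_one (hν : ν ≠ 0) : flProfile ν μ 1 = 2 ^ ν := by
  norm_num [flProfile, zero_rpow hν]

lemma flProfile_eq_rpow_mul {x : ℝ} (hx : 1 ≤ x) :
    flProfile ν μ x = x ^ (ν - μ) * ((1 + 1 / x) ^ ν - (1 - 1 / x) ^ ν) := by
  have hx0 : 0 < x := one_pos.trans_le hx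
  have hinv : 1 / x ≤ 1 := (div_le_one hx0).mpr hx
  have hplus : x + 1 = x * (1 + 1 / x) := by field_simp
  have hminus : x - 1 = x * (1 - 1 / x) := by field_simp
  rw [flProfile, hplus, hminus, mul_rpow hx0.le (by positivity), mul_rpow hx0.le (by linarith),
    rpow_sub hx0]
  field_simp

lemma flProfile_strictAntiOn (hν : 0 < ν) (hνμ : ν < μ) :
    StrictAntiOn (flProfile ν μ) (Set.Ici 1) := by
  intro x (hx : 1 ≤ x) y (hy : 1 ≤ y) hxy
  have hx0 : 0 < x := one_pos.trans_le hx
  have hy0 : 0 < y := one_pos.trans_le hy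
  have hφy : 0 < (1 + 1 / y) ^ ν - (1 - 1 / y) ^ ν := by
    simpa using one_add_rpow_sub_one_sub_rpow_lt hν le_rfl (one_div_pos.mpr hy0)
      ((div_le_one hy0).mpr hy)
  have hφ : (1 + 1 / y) ^ ν - (1 - 1 / y) ^ ν < (1 + 1 / x) ^ ν - (1 - 1 / x) ^ ν :=
    one_add_rpow_sub_one_sub_rpow_lt hν (by positivity) (one_div_lt_one_div_of_lt hx0 hxy)
      ((div_le_one hx0).mpr hx)
  rw [flProfile_eq_rpow_mul hx, flProfile_eq_rpow_mul hy]
  calc y ^ (ν - μ) * ((1 + 1 / y) ^ ν - (1 - 1 / y) ^ ν)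
      < x ^ (ν - μ) * ((1 + 1 / y) ^ ν - (1 - 1 / y) ^ ν) :=
        mul_lt_mul_of_pos_right (rpow_lt_rpow_of_neg hx0 hxy (by linarith)) hφy
    _ < x ^ (ν - μ) * ((1 + 1 / x) ^ ν - (1 - 1 / x) ^ ν) :=
        mul_lt_mul_of_pos_left hφ (by positivity)

lemma flProfile_le_rpow (hν : 0 ≤ ν) {x : ℝ} (hx : 1 ≤ x) :
    flProfile ν μ x ≤ 2 ^ ν * x ^ (ν - μ) := by
  have hx0 : 0 < x := one_pos.trans_le hx
  have hinv : 1 / x ≤ 1 := (div_le_one hx0).mpr hx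
  have hplus : (1 + 1 / x) ^ ν ≤ 2 ^ ν := rpow_le_rpow (by positivity) (by linarith) hν
  have hminus : 0 ≤ (1 - 1 / x) ^ ν := rpow_nonneg (by linarith) _
  rw [flProfile_eq_rpow_mul hx, mul_comm]
  gcongr
  linarith

lemma tendsto_flProfile_atTop (hν : 0 < ν) (hνμ : ν < μ) :
    Tendsto (flProfile ν μ) atTop (𝓝 0) := by
  have hbound : Tendsto (fun x : ℝ => 2 ^ ν * x ^ (ν - μ)) atTop (𝓝 0) := by
    simpa [neg_sub] using (tendsto_rpow_neg_atTop (sub_pos.mpr hνμ)).const_mul ((2 : ℝ) ^ ν)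
  refine squeeze_zero' ?_ ?_ hbound
  · filter_upwards [eventually_ge_atTop 1] with x hx using (flProfile_pos hν hx).le
  · filter_upwards [eventually_ge_atTop 1] with x hx using flProfile_le_rpow hν.le hx

end Profile

section Entries

variable {α μ ν κμ C : ℝ} {N : ℕ}

lemma flEntry_one : flEntry α μ ν κμ C N 1 = -(C * ((2 : ℝ) ^ ν + κμ - 1) / 2) := by
  simp [flEntry]

lemma flEntry_of_two_le {k : ℕ} (hk : 2 ≤ k) :
    flEntry α μ ν κμ C N k = -(C / 2 * flProfile ν μ k) := by
  rw [flEntry, if_neg (by omega), if_neg (by omega), flProfile]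
  ring

lemma abs_flEntry_of_two_le (hν : 0 < ν) (hC : 0 ≤ C) {k : ℕ} (hk : 2 ≤ k) :
    |flEntry α μ ν κμ C N k| = C / 2 * flProfile ν μ k := by
  have hk1 : (1 : ℝ) ≤ k := by exact_mod_cast (by omega : 1 ≤ k)
  have hF := (flProfile_pos (μ := μ) hν hk1).le
  rw [flEntry_of_two_le hk, abs_neg, abs_of_nonneg (by positivity)]

lemma abs_flEntry_one (hν : 0 ≤ ν) (hκ : 1 ≤ κμ) (hC : 0 ≤ C) :
    |flEntry α μ ν κμ C N 1| = C * ((2 : ℝ) ^ ν + κμ - 1) / 2 := by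
  have h2ν : (1 : ℝ) ≤ 2 ^ ν := one_le_rpow one_le_two hν
  have hB : 0 ≤ (2 : ℝ) ^ ν + κμ - 1 := by linarith
  rw [flEntry_one, abs_neg, abs_of_nonneg (by positivity)]

lemma abs_flEntry_one_lt_flEntry_zero (hα : 0 < α) (hν : 0 < ν) (hκ : 1 ≤ κμ) (hC : 0 < C)
    (hN : 1 ≤ N) : |flEntry α μ ν κμ C N 1| < flEntry α μ ν κμ C N 0 := by
  have hNR : (1 : ℝ) ≤ N := by exact_mod_cast hN
  have hsum : 0 ≤ ∑ ℓ ∈ Finset.Icc 2 (N - 1),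
      (((ℓ : ℝ) + 1) ^ ν - ((ℓ : ℝ) - 1) ^ ν) / (ℓ : ℝ) ^ μ := by
    refine Finset.sum_nonneg fun ℓ hℓ => ?_
    have hℓ : (2 : ℝ) ≤ ℓ := by exact_mod_cast (Finset.mem_Icc.mp hℓ).1
    exact div_nonneg (sub_nonneg.mpr (rpow_le_rpow (by linarith) (by linarith) hν.le))
      (by positivity)
  have hlast : 0 ≤ ((N : ℝ) ^ ν - ((N : ℝ) - 1) ^ ν) / (N : ℝ) ^ μ :=
    div_nonneg (sub_nonneg.mpr (rpow_le_rpow (by linarith) (by linarith) hν.le)) (by positivity)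
  have htail : 0 < 2 * ν / (α * (N : ℝ) ^ α) := by positivity
  have h2ν : (1 : ℝ) ≤ 2 ^ ν := one_le_rpow one_le_two hν.le
  rw [abs_flEntry_one hν.le hκ hC.le, flEntry, if_pos rfl]
  nlinarith

lemma abs_flEntry_succ_lt (hν : 0 < ν) (hνμ : ν < μ) (hκ : 1 ≤ κμ) (hC : 0 < C) {k : ℕ}
    (hk : 1 ≤ k) : |flEntry α μ ν κμ C N (k + 1)| < |flEntry α μ ν κμ C N k| := by
  have hdecr : flProfile ν μ ((k + 1 : ℕ) : ℝ) < flProfile ν μ k :=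
    flProfile_strictAntiOn hν hνμ (Set.mem_Ici.mpr (by exact_mod_cast hk))
      (Set.mem_Ici.mpr (by norm_cast; omega)) (by push_cast; exact lt_add_one _)
  rw [abs_flEntry_of_two_le hν hC.le (by omega)]
  rcases hk.eq_or_lt with rfl | hk
  · rw [abs_flEntry_one hν.le hκ hC.le]
    rw [Nat.cast_one, flProfile_one hν.ne'] at hdecr
    calc C / 2 * flProfile ν μ ((1 + 1 : ℕ) : ℝ) < C / 2 * 2 ^ ν :=
          mul_lt_mul_of_pos_left hdecr (half_pos hC)
      _ ≤ C * ((2 : ℝ) ^ ν + κμ - 1) / 2 := by nlinarith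
  · rw [abs_flEntry_of_two_le hν hC.le hk]
    exact mul_lt_mul_of_pos_left hdecr (half_pos hC)

lemma tendsto_abs_flEntry_sub_two (hν : 0 < ν) (hνμ : ν < μ) (hC : 0 ≤ C) :
    Tendsto (fun N : ℕ => |flEntry α μ ν κμ C N (N - 2)|) atTop (𝓝 0) := by
  have hshift : Tendsto (fun N : ℕ => ((N - 2 : ℕ) : ℝ)) atTop atTop :=
    tendsto_natCast_atTop_atTop.comp (tendsto_sub_atTop_nat 2)
  have hlim := ((tendsto_flProfile_atTop hν hνμ).comp hshift).const_mul (C / 2)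
  rw [mul_zero] at hlim
  refine hlim.congr' ?_
  filter_upwards [eventually_ge_atTop 4] with N hN
  rw [Function.comp_apply, abs_flEntry_of_two_le hν hC (by omega)]

end Entries

theorem stmt3_general (α μ ν κμ C : ℝ) (N : ℕ)
    (hα : 0 < α) (hμl : α < μ)
    (hν : ν = μ - α) (hκ : κμ = if μ < 2 then 1 else 2)
    (hC : 0 < C) (hN : 3 ≤ N) :
    let g := flEntry α μ ν κμ C N
    -- a₁₁ > |a₁₂|
    |g 1| < g 0 ∧
    -- |a₁₂| > |a₁₃| > ⋯ > |a_{1,N-1}|  (column j ↔ offset j-1)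
    (∀ k : ℕ, 1 ≤ k → k ≤ N - 3 → |g (k + 1)| < |g k|) ∧
    -- |a_{1,N-1}| → 0 as N → ∞
    Filter.Tendsto (fun N' : ℕ => |flEntry α μ ν κμ C N' (N' - 2)|)
      Filter.atTop (nhds 0) := by
  intro g
  have hν0 : 0 < ν := by linarith
  have hνμ : ν < μ := by linarith
  have hκ1 : (1 : ℝ) ≤ κμ := by rw [hκ]; split_ifs <;> norm_num
  exact ⟨abs_flEntry_one_lt_flEntry_zero hα hν0 hκ1 hC (by omega),
    fun k hk _ => abs_flEntry_succ_lt hν0 hνμ hκ1 hC hk,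
    tendsto_abs_flEntry_sub_two hν0 hνμ hC.le⟩

theorem stmt3 (α μ ν κμ C : ℝ) (N : ℕ)
    (hα : 0 < α) (hα2 : α < 2) (hμl : α < μ) (hμu : μ ≤ 2)
    (hν : ν = μ - α) (hκ : κμ = if μ < 2 then 1 else 2)
    (hC : 0 < C) (hN : 3 ≤ N) :
    let g := flEntry α μ ν κμ C N
    -- a₁₁ > |a₁₂|
    |g 1| < g 0 ∧
    -- |a₁₂| > |a₁₃| > ⋯ > |a_{1,N-1}|  (column j ↔ offset j-1)
    (∀ k : ℕ, 1 ≤ k → k ≤ N - 3 → |g (k + 1)| < |g k|) ∧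
    -- |a_{1,N-1}| → 0 as N → ∞
    Filter.Tendsto (fun N' : ℕ => |flEntry α μ ν κμ C N' (N' - 2)|)
      Filter.atTop (nhds 0) :=
  stmt3_general α μ ν κμ C N hα hμl hν hκ hC hN
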